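/- Let Γ be a totally ordered abelian group, S = Γ_{≥0} its submonoid of nonnegative elements, K a field, and D = K[x^S] the semigroup algebra of S over K. Then R(D) = { f/g : f, g ∈ D, g ≠ 0, deg(f) ≤ deg(g) }, where deg(f) is the largest s ∈ S with nonzero coefficient in f, and this set is a ring. -/

import Mathlib

noncomputable def recip (D : Type*) [CommRing D] [IsDomain D] : Subring (FractionRing D) :=
  Subring.closure {x | ∃ d : D, d ≠ 0 ∧ x = (algebraMap D (FractionRing D) d)⁻¹}

instance semigroupAlgebraIsDomain (Γ : Type*) [AddCommGroup Γ] [LinearOrder Γ] [IsOrderedAddMonoid Γ]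
    (K : Type*) [Field K] : IsDomain (AddMonoidAlgebra K {x : Γ // 0 ≤ x}) :=
  NoZeroDivisors.to_isDomain _

/-- The degree of an element of the semigroup algebra `K[x^S]`, `S = Γ₊`, as an element
of `WithBot S` (so `deg 0 = ⊥ = -∞`). -/
def sdeg {Γ : Type*} [AddCommGroup Γ] [LinearOrder Γ] [IsOrderedAddMonoid Γ] {K : Type*} [Field K]
    (f : AddMonoidAlgebra K {x : Γ // 0 ≤ x}) : WithBot {x : Γ // 0 ≤ x} :=
  f.coeff.support.max

/-!
Every generator `1/d` of `R(D)` has the form `f/g` with `deg f = 0 ≤ deg g`, and since `deg` is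
multiplicative and subadditive these fractions form a subring; so it contains `R(D)`.

Conversely, `f/g` is a `K`-combination of the fractions `x^s/g` with `s ≤ deg g`, and nonzero
constants lie in `R(D)` (`c = 1/c⁻¹`). If `s` is at most the least exponent `s₀` of `g`, then
`x^s ∣ g` and `x^s/g` is the reciprocal of an element of `D`. Otherwise write
`g = h + c₀x^{s₀}`: then `deg h = deg g`, `h` has fewer terms than `g`, and
`x^s/g = (x^s/h) · (1 - c₀x^{s₀}/g)`, which lies in `R(D)` by induction on the number of terms.
-/

theorem Finset.max_erase_of_coe_lt_max {α : Type*} [LinearOrder α] {s : Finset α} {a : α}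
    (h : (a : WithBot α) < s.max) : (s.erase a).max = s.max := by
  by_cases ha : a ∈ s
  · have hins : s.max = max (a : WithBot α) (s.erase a).max := by
      rw [← Finset.max_insert, Finset.insert_erase ha]
    rw [hins, lt_max_iff, lt_self_iff_false, false_or] at h
    rw [hins, max_eq_right h.le]
  · rw [Finset.erase_eq_of_notMem ha]

theorem AddMonoidAlgebra.of'_dvd_of_forall_mem_support {R M : Type*} [Semiring R]
    [AddCommMonoid M] [IsCancelAdd M] {x : AddMonoidAlgebra R M} {m : M}
    (h : ∀ a ∈ x.coeff.support, ∃ d, a = m + d) : of' R M m ∣ x := by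
  refine of'_dvd_iff_modOf_eq_zero.mpr (AddMonoidAlgebra.ext (Finsupp.ext fun a => ?_))
  by_cases ha : ∃ d, a = m + d
  · exact coeff_modOf_of_exists_add x m a ha
  · rw [coeff_modOf_of_not_exists_add x m a ha]
    exact Finsupp.notMem_support_iff.mp (mt (h a) ha)

section Recip

variable {D : Type*} [CommRing D] [IsDomain D]

theorem inv_algebraMap_mem_recip {d : D} (hd : d ≠ 0) :
    (algebraMap D (FractionRing D) d)⁻¹ ∈ recip D :=
  Subring.subset_closure ⟨d, hd, rfl⟩

theorem algebraMap_mem_recip_of_isUnit {u : D} (hu : IsUnit u) :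
    algebraMap D (FractionRing D) u ∈ recip D := by
  obtain ⟨u, rfl⟩ := hu
  have hinv : algebraMap D (FractionRing D) u = (algebraMap D (FractionRing D) ↑u⁻¹)⁻¹ := by
    refine eq_inv_of_mul_eq_one_left ?_
    rw [← map_mul, Units.mul_inv, map_one]
  rw [hinv]
  exact inv_algebraMap_mem_recip u⁻¹.ne_zero

theorem div_mem_recip_of_dvd {f g : D} (hg : g ≠ 0) (hfg : f ∣ g) :
    algebraMap D (FractionRing D) f / algebraMap D (FractionRing D) g ∈ recip D := by
  obtain ⟨q, rfl⟩ := hfg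
  have hf : algebraMap D (FractionRing D) f ≠ 0 :=
    IsFractionRing.to_map_eq_zero_iff.not.mpr (left_ne_zero_of_mul hg)
  rw [map_mul, div_mul_cancel_left₀ hf]
  exact inv_algebraMap_mem_recip (right_ne_zero_of_mul hg)

end Recip

open AddMonoidAlgebra

theorem AddMonoidAlgebra.algebraMap_single_zero_mem_recip {K M : Type*} [Field K]
    [AddCommMonoid M] [IsDomain K[M]] (c : K) :
    algebraMap K[M] (FractionRing K[M]) (single 0 c) ∈ recip K[M] := by
  rcases eq_or_ne c 0 with rfl | hc
  · rw [single_zero, map_zero]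
    exact zero_mem _
  · exact algebraMap_mem_recip_of_isUnit (hc.isUnit.map singleZeroRingHom)

namespace NonnegSemigroupAlgebra

variable {Γ : Type*} [AddCommGroup Γ] [LinearOrder Γ] [IsOrderedAddMonoid Γ] {K : Type*} [Field K]

local notation "𝕊" => {x : Γ // 0 ≤ x}
local notation "φ" => algebraMap (AddMonoidAlgebra K {x : Γ // 0 ≤ x})
  (FractionRing (AddMonoidAlgebra K {x : Γ // 0 ≤ x}))

theorem sdeg_zero : sdeg (0 : K[𝕊]) = ⊥ := by
  simp [sdeg]

theorem sdeg_neg (f : K[𝕊]) : sdeg (-f) = sdeg f := by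
  rw [sdeg, sdeg, coeff_neg, Finsupp.support_neg]

theorem sdeg_single {s : 𝕊} {c : K} (hc : c ≠ 0) : sdeg (single s c : K[𝕊]) = s := by
  rw [sdeg, coeff_single, Finsupp.support_single s hc, Finset.max_singleton]

theorem sdeg_one : sdeg (1 : K[𝕊]) = (0 : 𝕊) :=
  sdeg_single one_ne_zero

theorem le_sdeg_of_mem_support {f : K[𝕊]} {s : 𝕊} (hs : s ∈ f.coeff.support) :
    (s : WithBot 𝕊) ≤ sdeg f :=
  Finset.le_max hs

theorem sdeg_one_le {g : K[𝕊]} (hg : g ≠ 0) : sdeg (1 : K[𝕊]) ≤ sdeg g := by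
  obtain ⟨s, hs⟩ := Finsupp.support_nonempty_iff.mpr (coeff_eq_zero.not.mpr hg)
  rw [sdeg_one]
  exact (WithBot.coe_le_coe.mpr (show (0 : 𝕊) ≤ s from s.2)).trans (le_sdeg_of_mem_support hs)

theorem sdeg_add_le (f g : K[𝕊]) : sdeg (f + g) ≤ max (sdeg f) (sdeg g) :=
  supDegree_add_le (D := WithBot.some)

theorem sdeg_eq_supDegree {f : K[𝕊]} (hf : f ≠ 0) : sdeg f = supDegree id f := by
  have hs : f.coeff.support.Nonempty :=
    Finsupp.support_nonempty_iff.mpr (coeff_eq_zero.not.mpr hf)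
  rw [sdeg, Finset.max_eq_sup_coe, ← supDegree_withBot_some_comp (D := (id : 𝕊 → 𝕊)) hs]
  rfl

theorem sdeg_mul (f g : K[𝕊]) : sdeg (f * g) = sdeg f + sdeg g := by
  rcases eq_or_ne f 0 with rfl | hf
  · rw [zero_mul, sdeg_zero, WithBot.bot_add]
  rcases eq_or_ne g 0 with rfl | hg
  · rw [mul_zero, sdeg_zero, WithBot.add_bot]
  have hlc : leadingCoeff (id : 𝕊 → 𝕊) f * leadingCoeff id g ≠ 0 :=
    mul_ne_zero ((leadingCoeff_ne_zero Function.injective_id).mpr hf)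
      ((leadingCoeff_ne_zero Function.injective_id).mpr hg)
  rw [sdeg_eq_supDegree (mul_ne_zero hf hg), sdeg_eq_supDegree hf, sdeg_eq_supDegree hg,
    ← WithBot.coe_add]
  exact congrArg _ (supDegree_mul Function.injective_id (fun _ _ => rfl) hlc hf hg)

theorem sdeg_erase_of_coe_lt {g : K[𝕊]} {s : 𝕊} (hs : (s : WithBot 𝕊) < sdeg g) :
    sdeg (erase s g) = sdeg g := by
  classical
  rw [sdeg, coeff_erase, Finsupp.support_erase]
  exact Finset.max_erase_of_coe_lt_max hs

theorem single_eq_single_zero_mul_of' (s : 𝕊) (c : K) : single s c = single 0 c * of' K 𝕊 s := by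
  rw [of'_apply, single_mul_single, zero_add, mul_one]

theorem of'_div_mem_recip_of_forall_le {g : K[𝕊]} (hg : g ≠ 0) {s : 𝕊}
    (hs : ∀ u ∈ g.coeff.support, s ≤ u) : φ (of' K 𝕊 s) / φ g ∈ recip K[𝕊] :=
  div_mem_recip_of_dvd hg <| of'_dvd_of_forall_mem_support fun u hu =>
    ⟨⟨u - s, sub_nonneg.mpr (hs u hu)⟩, Subtype.ext (by simp)⟩

theorem of'_div_mem_recip {g : K[𝕊]} (hg : g ≠ 0) {s : 𝕊} (hs : (s : WithBot 𝕊) ≤ sdeg g) :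
    φ (of' K 𝕊 s) / φ g ∈ recip K[𝕊] := by
  classical
  induction hn : g.coeff.support.card using Nat.strong_induction_on generalizing g with
  | _ n ih =>
    have hne : g.coeff.support.Nonempty :=
      Finsupp.support_nonempty_iff.mpr (coeff_eq_zero.not.mpr hg)
    set s₀ := g.coeff.support.min' hne
    have hs₀_le (u : 𝕊) (hu : u ∈ g.coeff.support) : s₀ ≤ u := g.coeff.support.min'_le u hu
    rcases le_or_gt s s₀ with hle | hlt
    · exact of'_div_mem_recip_of_forall_le hg fun u hu => hle.trans (hs₀_le u hu)
    set h := erase s₀ g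
    have hdeg : sdeg h = sdeg g :=
      sdeg_erase_of_coe_lt ((WithBot.coe_lt_coe.mpr hlt).trans_le hs)
    have hh : h ≠ 0 := by
      rintro h0
      rw [h0, sdeg_zero] at hdeg
      exact WithBot.not_coe_le_bot s (hdeg ▸ hs)
    have hcard : h.coeff.support.card < n := by
      rw [← hn, coeff_erase, Finsupp.support_erase]
      exact Finset.card_erase_lt_of_mem (g.coeff.support.min'_mem hne)
    have hsum : φ h + φ (single s₀ (g.coeff s₀)) = φ g := by
      rw [← map_add, erase_add_single]
    have hlead : φ (single s₀ (g.coeff s₀)) / φ g ∈ recip K[𝕊] := by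
      rw [single_eq_single_zero_mul_of', map_mul, mul_div_assoc]
      exact mul_mem (algebraMap_single_zero_mem_recip _) (of'_div_mem_recip_of_forall_le hg hs₀_le)
    have hφh : φ h ≠ 0 := IsFractionRing.to_map_eq_zero_iff.not.mpr hh
    have hφg : φ g ≠ 0 := IsFractionRing.to_map_eq_zero_iff.not.mpr hg
    have hsplit : φ (of' K 𝕊 s) / φ g =
        φ (of' K 𝕊 s) / φ h * (1 - φ (single s₀ (g.coeff s₀)) / φ g) := by
      rw [one_sub_div hφg, ← hsum, add_sub_cancel_right, div_mul_div_cancel₀ hφh]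
    rw [hsplit]
    exact mul_mem (ih _ hcard hh (hdeg ▸ hs) rfl) (sub_mem (one_mem _) hlead)

theorem div_mem_recip_of_sdeg_le {f g : K[𝕊]} (hg : g ≠ 0) (hdeg : sdeg f ≤ sdeg g) :
    φ f / φ g ∈ recip K[𝕊] := by
  rw [← sum_coeff_single f, Finsupp.sum, map_sum, Finset.sum_div]
  refine Subring.sum_mem _ fun u hu => ?_
  rw [single_eq_single_zero_mul_of', map_mul, mul_div_assoc]
  exact mul_mem (algebraMap_single_zero_mem_recip _)
    (of'_div_mem_recip hg ((le_sdeg_of_mem_support hu).trans hdeg))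

variable (Γ K) in
def nonposDegSubring : Subring (FractionRing K[𝕊]) where
  carrier := {x | ∃ f g : K[𝕊], g ≠ 0 ∧ sdeg f ≤ sdeg g ∧ x = φ f / φ g}
  mul_mem' := by
    rintro _ _ ⟨f₁, g₁, hg₁, hd₁, rfl⟩ ⟨f₂, g₂, hg₂, hd₂, rfl⟩
    refine ⟨f₁ * f₂, g₁ * g₂, mul_ne_zero hg₁ hg₂, ?_, by rw [map_mul, map_mul, div_mul_div_comm]⟩
    rw [sdeg_mul, sdeg_mul]
    exact add_le_add hd₁ hd₂
  one_mem' := ⟨1, 1, one_ne_zero, le_rfl, by rw [map_one, div_one]⟩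
  add_mem' := by
    rintro _ _ ⟨f₁, g₁, hg₁, hd₁, rfl⟩ ⟨f₂, g₂, hg₂, hd₂, rfl⟩
    refine ⟨f₁ * g₂ + f₂ * g₁, g₁ * g₂, mul_ne_zero hg₁ hg₂, ?_, ?_⟩
    · refine (sdeg_add_le _ _).trans (max_le ?_ ?_) <;> rw [sdeg_mul, sdeg_mul]
      · exact add_le_add_left hd₁ _
      · rw [add_comm (sdeg g₁)]
        exact add_le_add_left hd₂ _
    · rw [map_add, map_mul, map_mul, map_mul, div_add_div _ _
        (IsFractionRing.to_map_eq_zero_iff.not.mpr hg₁)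
        (IsFractionRing.to_map_eq_zero_iff.not.mpr hg₂)]
      ring
  zero_mem' := ⟨0, 1, one_ne_zero, by rw [sdeg_zero]; exact bot_le, by rw [map_zero, zero_div]⟩
  neg_mem' := by
    rintro _ ⟨f, g, hg, hd, rfl⟩
    exact ⟨-f, g, hg, (sdeg_neg f).trans_le hd, by rw [map_neg, neg_div]⟩

theorem recip_le_nonposDegSubring : recip K[𝕊] ≤ nonposDegSubring Γ K :=
  Subring.closure_le.mpr <| by
    rintro _ ⟨d, hd, rfl⟩
    exact ⟨1, d, hd, sdeg_one_le hd, by rw [map_one, one_div]⟩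

theorem nonposDegSubring_le_recip : nonposDegSubring Γ K ≤ recip K[𝕊] := by
  rintro _ ⟨f, g, hg, hdeg, rfl⟩
  exact div_mem_recip_of_sdeg_le hg hdeg

end NonnegSemigroupAlgebra

/-- For the semigroup algebra `D = K[x^S]` on the nonnegative part `S`
of a totally ordered abelian group `Γ`, `R(D)` equals the set of fractions `f/g` with
`g ≠ 0` and `deg f ≤ deg g` (and in particular this set is a ring, being the subring
`R(D)`). -/
theorem stmt_5 (Γ : Type*) [AddCommGroup Γ] [LinearOrder Γ] [IsOrderedAddMonoid Γ] (K : Type*) [Field K] :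
    letI D := AddMonoidAlgebra K {x : Γ // 0 ≤ x}
    (recip D : Set (FractionRing D)) =
      {x | ∃ f g : D, g ≠ 0 ∧ sdeg f ≤ sdeg g ∧
        x = algebraMap D (FractionRing D) f / algebraMap D (FractionRing D) g} :=
  congrArg SetLike.coe <|
    NonnegSemigroupAlgebra.recip_le_nonposDegSubring.antisymm
      NonnegSemigroupAlgebra.nonposDegSubring_le_recip
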